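/- arXiv:2504.03890 — 5 statements merged into one kernel-verified Lean document; each statement's English description precedes it below -/
import Mathlib

section
/- Minimax via Kleisli extension of the selection monad: let eval : X → Y → ℝ, let M : (X → ℝ) → X satisfy the argmax property (for all γ : X → ℝ and x : X, γ x ≤ γ (M γ)), and let m : (Y → ℝ) → Y satisfy the argmin property (for all γ : Y → ℝ and y : Y, γ (m γ) ≤ γ y). Define f : X → S(X × Y) (selection monad with R = ℝ) by f x = fun γ => (x, m (fun y => γ (x, y))). Then the pair (x₀, y₀) := f†(M)(fun p => eval p.1 p.2) is a minimax pair: (i) for all y : Y, eval x₀ y₀ ≤ eval x₀ y; and (ii) for all x : X, eval x (m (fun y => eval x y)) ≤ eval x₀ y₀. -/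
/-- The selection monad on `X` with loss type `R`. -/
def Sel (R X : Type*) : Type _ := (X → R) → X

/-- Unit of the selection monad. -/
def Sel.eta {R X : Type*} (x : X) : Sel R X := fun _ => x

/-- Kleisli extension of the selection monad. -/
def Sel.kleisli {R X Y : Type*} (f : X → Sel R Y) (F : Sel R X) : Sel R Y :=
  fun γ => f (F (fun x => γ (f x γ))) γ

/-- Solving one-move games via the Kleisli extension of the selection monad:
`Sel.kleisli f M eval` is a minimax pair. -/
theorem sel_minimax {X Y : Type*} (eval : X → Y → ℝ)
    (M : (X → ℝ) → X) (hM : ∀ (γ : X → ℝ) (x : X), γ x ≤ γ (M γ))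
    (m : (Y → ℝ) → Y) (hm : ∀ (γ : Y → ℝ) (y : Y), γ (m γ) ≤ γ y)
    (f : X → Sel ℝ (X × Y))
    (hf : f = fun x => fun γ => (x, m (fun y => γ (x, y))))
    (p : X × Y) (hp : p = Sel.kleisli f M (fun q => eval q.1 q.2)) :
    (∀ y : Y, eval p.1 p.2 ≤ eval p.1 y) ∧
    (∀ x : X, eval x (m (fun y => eval x y)) ≤ eval p.1 p.2) := by
  subst hf hp
  simp only [Sel.kleisli]
  constructor
  · intro y
    exact hm _ y
  · intro x
    exact hM (fun x => eval x (m (fun y => eval x y))) x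
end

section
/- Loss coherence for the writer-augmented selection monad: for every x : X and γ : X → R, E_W(η(x))(γ) = γ x; and for every F : S_W(X), f : X → S_W(Y), and γ : Y → R, E_W(f†(F))(γ) = E_W(F)(f̃(γ)), i.e., the loss of the Kleisli-extended computation at γ equals the loss of F at the transformed loss function f̃(γ). -/
/-- The writer-augmented selection monad on `X` with loss monoid `R`. -/
def SW (R X : Type*) : Type _ := (X → R) → R × X

/-- Unit of the writer-augmented selection monad. -/
def SW.eta {R X : Type*} [AddCommMonoid R] (x : X) : SW R X := fun _ => (0, x)

/-- The loss of `F : SW R X` at a loss function `γ`. -/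
def SW.loss {R X : Type*} [AddCommMonoid R] (F : SW R X) (γ : X → R) : R :=
  (F γ).1 + γ (F γ).2

/-- The loss-continuation transformer associated to `f : X → SW R Y`. -/
def SW.tilde {R X Y : Type*} [AddCommMonoid R] (f : X → SW R Y) (γ : Y → R) : X → R :=
  fun x => SW.loss (f x) γ

/-- Kleisli extension of the writer-augmented selection monad. -/
def SW.kleisli {R X Y : Type*} [AddCommMonoid R] (f : X → SW R Y) (F : SW R X) : SW R Y :=
  fun γ =>
    let p := F (SW.tilde f γ)
    let q := f p.2 γ
    (p.1 + q.1, q.2)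


/-- Loss coherence for the writer-augmented selection monad. -/
theorem sw_loss_coherence {R : Type*} [AddCommMonoid R] :
    (∀ (X : Type) (x : X) (γ : X → R), SW.loss (SW.eta x) γ = γ x) ∧
    (∀ (X Y : Type) (F : SW R X) (f : X → SW R Y) (γ : Y → R),
      SW.loss (SW.kleisli f F) γ = SW.loss F (SW.tilde f γ)) := by
  refine ⟨fun X x γ => by simp [SW.loss, SW.eta], fun X Y F f γ => ?_⟩
  simp [SW.loss, SW.kleisli, SW.tilde, add_assoc]
end

section
/- Freeness of F(R × X) as an action ε-algebra: for every action ε-algebra (Y, ψ, •) and every map f : X → Y, there exists a unique map h : F(R × X) → Y such that h (leaf (r, x)) = r • f x for all r : R and x : X, and h (node i p k) = ψ i p (fun a => h (k a)) for all i, p, k. Moreover, this unique h preserves the action: h (r · u) = r • h u for all r : R and u : F(R × X) (the commuting square used in the handler semantics). -/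
/-- The free algebra on `X` for a signature given by an index type `ι` of
operations with parameter types `P i` and arity types `A i`. -/
inductive FreeAlg {ι : Type*} (P : ι → Type*) (A : ι → Type*) (X : Type*) : Type _
  | leaf : X → FreeAlg P A X
  | node : (i : ι) → P i → (A i → FreeAlg P A X) → FreeAlg P A X

/-- The recursively defined `R`-action on `FreeAlg P A (R × X)`:
add `r` to the loss component of every leaf. -/
def FreeAlg.act {ι : Type*} {P A : ι → Type*} {R X : Type*} [AddCommMonoid R]
    (r : R) : FreeAlg P A (R × X) → FreeAlg P A (R × X)
  | .leaf (s, x) => .leaf (r + s, x)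
  | .node i p k => .node i p (fun a => FreeAlg.act r (k a))

def FreeAlg.elim {ι : Type*} {P A : ι → Type*} {R X Y : Type*} [AddCommMonoid R]
    (ψ : (i : ι) → P i → (A i → Y) → Y) (smul : R → Y → Y) (f : X → Y) :
    FreeAlg P A (R × X) → Y
  | .leaf (r, x) => smul r (f x)
  | .node i p k => ψ i p (fun a => FreeAlg.elim ψ smul f (k a))

/-- Freeness of `FreeAlg P A (R × X)` as an action ε-algebra: for every action
ε-algebra `(Y, ψ, •)` and every map `f : X → Y` there is a unique map `h`
sending `leaf (r, x)` to `r • f x` and commuting with the operations; moreover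
this unique map preserves the action. -/
theorem freeAlg_action_freeness {ι : Type*} {P A : ι → Type*} {R X Y : Type*}
    [AddCommMonoid R]
    (ψ : (i : ι) → P i → (A i → Y) → Y) (smul : R → Y → Y)
    (hzero : ∀ y : Y, smul 0 y = y)
    (hadd : ∀ (r s : R) (y : Y), smul r (smul s y) = smul (r + s) y)
    (hcomm : ∀ (r : R) (i : ι) (p : P i) (k : A i → Y),
      smul r (ψ i p k) = ψ i p (fun a => smul r (k a)))
    (f : X → Y) :
    (∃! h : FreeAlg P A (R × X) → Y,
      (∀ (r : R) (x : X), h (FreeAlg.leaf (r, x)) = smul r (f x)) ∧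
      (∀ (i : ι) (p : P i) (k : A i → FreeAlg P A (R × X)),
        h (FreeAlg.node i p k) = ψ i p (fun a => h (k a)))) ∧
    (∀ h : FreeAlg P A (R × X) → Y,
      ((∀ (r : R) (x : X), h (FreeAlg.leaf (r, x)) = smul r (f x)) ∧
       (∀ (i : ι) (p : P i) (k : A i → FreeAlg P A (R × X)),
         h (FreeAlg.node i p k) = ψ i p (fun a => h (k a)))) →
      ∀ (r : R) (u : FreeAlg P A (R × X)), h (FreeAlg.act r u) = smul r (h u)) := by
  constructor
  · refine ⟨FreeAlg.elim ψ smul f, ⟨fun r x => rfl, fun i p k => rfl⟩, ?_⟩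
    intro g ⟨hg1, hg2⟩
    funext u
    induction u with
    | leaf rx => obtain ⟨r, x⟩ := rx; exact hg1 r x
    | node i p k ih => rw [hg2]; simp only [FreeAlg.elim]; exact congrArg _ (funext ih)
  · intro h ⟨h1, h2⟩ r u
    induction u with
    | leaf sx =>
        obtain ⟨s, x⟩ := sx
        simp [FreeAlg.act, h1, hadd]
    | node i p k ih =>
        simp [FreeAlg.act, h2, hcomm, ih]
end

section
/- The T-augmented selection monad is a lawful monad: with unit η(x) = fun γ => pure x and Kleisli extension f†(F) = fun γ => (F (fun x => E_T(f x)(γ))) >>= (fun x => f x γ), the three monad laws hold: f†(η(x)) = f(x) for all x : X and f : X → S_T(Y); η†(F) = F for all F : S_T(X); and (fun x => g†(f x))†(F) = g†(f†(F)) for all F : S_T(X), f : X → S_T(Y), g : Y → S_T(Z). -/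
universe u

/-- The `T`-augmented selection monad on `X` with loss type `R`. -/
def SelT (T : Type u → Type u) (R X : Type u) : Type u := (X → R) → T X

/-- Unit of the `T`-augmented selection monad. -/
def SelT.eta {T : Type u → Type u} [Monad T] {R X : Type u} (x : X) : SelT T R X :=
  fun _ => pure x

/-- The loss of `F : SelT T R X` at a loss function `γ`, computed via the
Eilenberg–Moore algebra `α : T R → R`. -/
def SelT.loss {T : Type u → Type u} [Monad T] {R X : Type u}
    (α : T R → R) (F : SelT T R X) (γ : X → R) : R :=
  α (Functor.map γ (F γ))

/-- Kleisli extension of the `T`-augmented selection monad. -/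
def SelT.kleisli {T : Type u → Type u} [Monad T] {R X Y : Type u}
    (α : T R → R) (f : X → SelT T R Y) (F : SelT T R X) : SelT T R Y :=
  fun γ => (F (fun x => SelT.loss α (f x) γ)) >>= (fun x => f x γ)

/-- The `T`-augmented selection monad is a lawful monad: the three monad laws
hold for its unit and Kleisli extension. -/
theorem SelT_monad_laws {T : Type u → Type u} [Monad T] [LawfulMonad T]
    {R : Type u} (α : T R → R)
    (hpure : ∀ r : R, α (pure r) = r)
    (hjoin : ∀ m : T (T R), α (Functor.map α m) = α (joinM m)) :
    (∀ (X Y : Type u) (x : X) (f : X → SelT T R Y),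
      SelT.kleisli α f (SelT.eta x) = f x) ∧
    (∀ (X : Type u) (F : SelT T R X), SelT.kleisli α SelT.eta F = F) ∧
    (∀ (X Y Z : Type u) (F : SelT T R X) (f : X → SelT T R Y) (g : Y → SelT T R Z),
      SelT.kleisli α (fun x => SelT.kleisli α g (f x)) F =
        SelT.kleisli α g (SelT.kleisli α f F)) := by
  refine ⟨?_, ?_, ?_⟩
  · intro X Y x f
    funext γ
    simp [SelT.kleisli, SelT.eta]
  · intro X F
    funext γ
    have hγ : (fun x => SelT.loss α (SelT.eta (T := T) (R := R) x) γ) = γ := by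
      funext x
      simp [SelT.loss, SelT.eta, map_pure, hpure]
    simp [SelT.kleisli, hγ, SelT.eta]
  · intro X Y Z F f g
    funext γ
    have key : ∀ (x : X),
        SelT.loss α (SelT.kleisli α g (f x)) γ =
        SelT.loss α (f x) (fun y => SelT.loss α (g y) γ) := by
      intro x
      have h2 : ∀ m : T Y, α ((fun y => α (Functor.map γ (g y γ))) <$> m)
          = α (m >>= fun y => Functor.map γ (g y γ)) := by
        intro m
        rw [show ((fun y => α (Functor.map γ (g y γ))) <$> m)
            = α <$> ((fun y => Functor.map γ (g y γ)) <$> m) by simp [Functor.map_map],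
          hjoin]
        simp [joinM]
      simp only [SelT.loss, SelT.kleisli]
      rw [← bind_pure_comp, bind_assoc]
      simp only [bind_pure_comp]
      rw [h2]
    simp only [SelT.kleisli]
    simp only [key]
    rw [bind_assoc]
end

section
/- Loss coherence for the T-augmented selection monad: for every x : X and γ : X → R, E_T(η(x))(γ) = γ x; and for every F : S_T(X), f : X → S_T(Y), and γ : Y → R, E_T(f†(F))(γ) = E_T(F)(fun x => E_T(f x)(γ)). That is, the loss map F ↦ E_T(F) is a monad morphism from the T-augmented selection monad to the continuation monad with answer type R. -/
universe u

/-- Loss coherence for the `T`-augmented selection monad: the loss map is a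
monad morphism from the `T`-augmented selection monad to the continuation
monad with answer type `R`. -/
theorem SelT_loss_coherence {T : Type u → Type u} [Monad T] [LawfulMonad T]
    {R : Type u} (α : T R → R)
    (hpure : ∀ r : R, α (pure r) = r)
    (hjoin : ∀ m : T (T R), α (Functor.map α m) = α (joinM m)) :
    (∀ (X : Type u) (x : X) (γ : X → R), SelT.loss α (SelT.eta x) γ = γ x) ∧
    (∀ (X Y : Type u) (F : SelT T R X) (f : X → SelT T R Y) (γ : Y → R),
      SelT.loss α (SelT.kleisli α f F) γ =
        SelT.loss α F (fun x => SelT.loss α (f x) γ)) := by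
  constructor
  · intro X x γ
    simp [SelT.loss, SelT.eta, hpure]
  · intro X Y F f γ
    have key := hjoin ((fun x => Functor.map γ (f x γ)) <$> F (fun x => SelT.loss α (f x) γ))
    simp only [SelT.loss, SelT.kleisli, joinM, Functor.map, map_bind, bind_map_left,
      bind_pure_comp] at *
    simpa [Function.comp] using key.symm
end
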